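/- arXiv:1502.06571 — 2 statements merged into one kernel-verified Lean document; each statement's English description precedes it below -/
import Mathlib

section
/- Let s be a seminorm on ℝ² such that 𝓘²_+(s) ≤ 𝓘²_+(s ∘ T) for every T ∈ SL₂(ℝ). Then s is √2-quasi-conformal, i.e., s(v) ≤ √2·s(w) for all v, w in the unit circle S¹. -/
/-!
Let `I = 𝓘²_+(s)` and suppose `s(w)² = t·I` with `t < 1/2` for a unit vector `w`. The map
`T ∈ SL₂(ℝ)` that multiplies `w` by `λ = √(2 - 2t)` and `w^⊥` by `λ⁻¹` satisfies
`𝓘²_+(s ∘ T) ≤ ρ(t)·I` with `ρ(t) < 1`: writing `T u = λ⁻¹ y + c w`, the triangle inequality,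
`s ≤ √I ‖·‖` on `y` and the smallness of `s(w)` give a bound on `s(T u)` whose maximum over the
circle is computed by a weighted Cauchy–Schwarz inequality. This contradicts the minimality of
`𝓘²_+(s)`, so `s(w)² ≥ I/2 ≥ s(v)²/2` for all unit `v, w`.
-/

open MeasureTheory Metric

/-- `𝓘^p_+(s) = max{s(v)^p : v ∈ S^{n-1}}`, realized as the supremum over the unit sphere. -/
noncomputable def Iplus (n : ℕ) (p : ℝ) (s : Seminorm ℝ (EuclideanSpace ℝ (Fin n))) : ℝ :=
  ⨆ v : sphere (0 : EuclideanSpace ℝ (Fin n)) 1, (s v.1) ^ p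

open RealInnerProductSpace

lemma one_add_two_mul_mul_add_sq_le {t τ Y S : ℝ} (ht₀ : 0 ≤ t) (ht : t < 1 / 2)
    (hτ : τ ^ 2 = t) (hYS : Y ^ 2 + (1 - 4 * t ^ 2) * S ^ 2 = 1) :
    (1 + 2 * t) * (Y + (2 - 4 * t) * τ * S) ^ 2 ≤ 1 + 6 * t - 8 * t ^ 2 := by
  rcases ht₀.eq_or_lt with rfl | ht₀
  · obtain rfl : τ = 0 := pow_eq_zero_iff two_ne_zero |>.1 hτ
    nlinarith [sq_nonneg S]
  set p := 4 * t * (1 - 2 * t)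
  set q := 1 + 2 * t
  set G := (2 - 4 * t) * τ * S
  -- weighted Cauchy–Schwarz: `p Y² + q G² = p` is constant on the ellipse
  have hCS : p * (p + q) - p * q * (Y + G) ^ 2 = (p * Y - q * G) ^ 2 := by
    linear_combination (-(p + q) * p) * hYS + (-(p + q) * q * (2 - 4 * t) ^ 2 * S ^ 2) * hτ
  have hp : 0 < p := by simp only [p]; nlinarith
  refine le_of_mul_le_mul_left ?_ hp
  nlinarith [sq_nonneg (p * Y - q * G)]

noncomputable def stretchRatio (t : ℝ) : ℝ :=
  (1 + 6 * t - 8 * t ^ 2) / ((1 + 2 * t) * (2 - 2 * t))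

lemma stretchRatio_lt_one {t : ℝ} (ht₀ : 0 ≤ t) (ht : t < 1 / 2) : stretchRatio t < 1 := by
  rw [stretchRatio, div_lt_one (by nlinarith)]
  nlinarith [sq_pos_of_pos (by linarith : 0 < 1 - 2 * t)]

section Iplus

variable {n : ℕ} (s : Seminorm ℝ (EuclideanSpace ℝ (Fin n)))

lemma Seminorm.le_sum_single_mul_norm (x : EuclideanSpace ℝ (Fin n)) :
    s x ≤ (∑ i, s (EuclideanSpace.single i 1)) * ‖x‖ := by
  calc s x = s (∑ i, x i • EuclideanSpace.single i (1 : ℝ)) := by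
        congr 1; ext j; simp [Pi.single_apply]
    _ ≤ ∑ i, s (x i • EuclideanSpace.single i (1 : ℝ)) :=
        Finset.le_sum_of_subadditive s (map_zero s).le (map_add_le_add s) _ _
    _ = ∑ i, |x i| * s (EuclideanSpace.single i 1) := by
        simp only [map_smul_eq_mul, Real.norm_eq_abs]
    _ ≤ ∑ i, ‖x‖ * s (EuclideanSpace.single i 1) := by
        gcongr with i
        exact PiLp.norm_apply_le x i
    _ = _ := by rw [← Finset.mul_sum, mul_comm]

lemma bddAbove_range_rpow_sphere {p : ℝ} (hp : 0 ≤ p) :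
    BddAbove (Set.range fun v : sphere (0 : EuclideanSpace ℝ (Fin n)) 1 => s v.1 ^ p) := by
  refine ⟨(∑ i, s (EuclideanSpace.single i 1)) ^ p, ?_⟩
  rintro _ ⟨v, rfl⟩
  have := s.le_sum_single_mul_norm v.1
  rw [norm_eq_of_mem_sphere, mul_one] at this
  exact Real.rpow_le_rpow (apply_nonneg s _) this hp

variable {s}

lemma rpow_le_Iplus {p : ℝ} (hp : 0 ≤ p) {u : EuclideanSpace ℝ (Fin n)} (hu : ‖u‖ = 1) :
    s u ^ p ≤ Iplus n p s :=
  le_ciSup (f := fun v : sphere (0 : EuclideanSpace ℝ (Fin n)) 1 => s v.1 ^ p)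
    (bddAbove_range_rpow_sphere s hp) ⟨u, by simpa using hu⟩

lemma Iplus_le [NeZero n] {p B : ℝ}
    (hB : ∀ u : EuclideanSpace ℝ (Fin n), ‖u‖ = 1 → s u ^ p ≤ B) : Iplus n p s ≤ B :=
  have : Nonempty (sphere (0 : EuclideanSpace ℝ (Fin n)) 1) :=
    (NormedSpace.sphere_nonempty.2 zero_le_one).to_subtype
  ciSup_le fun v => hB v.1 (norm_eq_of_mem_sphere v)

lemma Seminorm.le_sqrt_Iplus_mul_norm (x : EuclideanSpace ℝ (Fin n)) :
    s x ≤ √(Iplus n 2 s) * ‖x‖ := by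
  rcases eq_or_ne x 0 with rfl | hx
  · simp
  have hu : ‖‖x‖⁻¹ • x‖ = 1 := norm_smul_inv_norm hx
  have h := rpow_le_Iplus (s := s) zero_le_two hu
  rw [Real.rpow_two, map_smul_eq_mul, norm_inv, norm_norm] at h
  rw [mul_comm, ← inv_mul_le_iff₀ (norm_pos_iff.2 hx)]
  exact Real.le_sqrt_of_sq_le h

end Iplus

section Stretch

variable {E : Type*} [NormedAddCommGroup E] [InnerProductSpace ℝ E]

noncomputable def stretchAlong (w : E) (l : ℝ) : E →ₗ[ℝ] E :=
  l⁻¹ • LinearMap.id + (l - l⁻¹) • (innerₛₗ ℝ w).smulRight w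

lemma stretchAlong_apply (w : E) (l : ℝ) (x : E) :
    stretchAlong w l x = l⁻¹ • x + ((l - l⁻¹) * ⟪w, x⟫) • w := by
  simp [stretchAlong, mul_smul]

lemma norm_add_inner_smul_sq {w : E} (hw : ‖w‖ = 1) (x : E) (k : ℝ) :
    ‖x + (k * ⟪w, x⟫) • w‖ ^ 2 = ‖x‖ ^ 2 + (2 * k + k ^ 2) * ⟪w, x⟫ ^ 2 := by
  rw [norm_add_sq_real, inner_smul_right, norm_smul, real_inner_comm, Real.norm_eq_abs, hw,
    mul_pow, sq_abs]
  ring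

lemma Seminorm.stretchAlong_sq_le (s : Seminorm ℝ E) {C t : ℝ} (hs : ∀ y, s y ≤ C * ‖y‖)
    (ht₀ : 0 ≤ t) (ht : t < 1 / 2) {w : E} (hw : ‖w‖ = 1) (hsw : s w ≤ √t * C)
    {x : E} (hx : ‖x‖ = 1) :
    s (stretchAlong w √(2 - 2 * t) x) ^ 2 ≤ stretchRatio t * C ^ 2 := by
  set l := √(2 - 2 * t)
  set a := ⟪w, x⟫
  set y := x + ((2 * t - 1) * a) • w
  have hl : l ^ 2 = 2 - 2 * t := Real.sq_sqrt (by linarith)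
  have hl₀ : 0 < l := Real.sqrt_pos.2 (by linarith)
  have hsplit : stretchAlong w l x = l⁻¹ • y + ((2 - 4 * t) * a / l) • w := by
    rw [stretchAlong_apply, smul_add, smul_smul, add_assoc, ← add_smul]
    congr 2
    field_simp
    linear_combination a * hl
  have hy : ‖y‖ ^ 2 + (1 - 4 * t ^ 2) * |a| ^ 2 = 1 := by
    rw [norm_add_inner_smul_sq hw, hx, sq_abs]
    ring
  have hbound : s (stretchAlong w l x) ≤ l⁻¹ * C * (‖y‖ + (2 - 4 * t) * √t * |a|) := by
    calc s (stretchAlong w l x) ≤ l⁻¹ * s y + (2 - 4 * t) * |a| / l * s w := by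
          rw [hsplit]
          refine (map_add_le_add s _ _).trans_eq ?_
          rw [map_smul_eq_mul, map_smul_eq_mul, Real.norm_eq_abs, Real.norm_eq_abs, abs_inv,
            abs_of_pos hl₀, abs_div, abs_mul, abs_of_pos hl₀,
            abs_of_pos (by linarith : 0 < 2 - 4 * t)]
      _ ≤ l⁻¹ * (C * ‖y‖) + (2 - 4 * t) * |a| / l * (√t * C) := by
          gcongr
          · exact hs y
          · have : 0 ≤ 2 - 4 * t := by linarith
            positivity
      _ = _ := by field_simp
  have hkey := one_add_two_mul_mul_add_sq_le ht₀ ht (Real.sq_sqrt ht₀) hy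
  calc s (stretchAlong w l x) ^ 2 ≤ (l⁻¹ * C * (‖y‖ + (2 - 4 * t) * √t * |a|)) ^ 2 :=
        pow_le_pow_left₀ (apply_nonneg s _) hbound 2
    _ = C ^ 2 * ((1 + 2 * t) * (‖y‖ + (2 - 4 * t) * √t * |a|) ^ 2) / ((1 + 2 * t) * l ^ 2) := by
        field_simp
    _ ≤ C ^ 2 * (1 + 6 * t - 8 * t ^ 2) / ((1 + 2 * t) * l ^ 2) := by gcongr
    _ = stretchRatio t * C ^ 2 := by rw [hl, stretchRatio]; ring

end Stretch

lemma det_stretchAlong {w : EuclideanSpace ℝ (Fin 2)} (hw : ‖w‖ = 1) {l : ℝ} (hl : l ≠ 0) :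
    LinearMap.det (stretchAlong w l) = 1 := by
  have hw2 : w 0 ^ 2 + w 1 ^ 2 = 1 := by
    simpa [hw, Fin.sum_univ_two] using (EuclideanSpace.norm_sq_eq w).symm
  rw [← LinearMap.det_toMatrix (EuclideanSpace.basisFun (Fin 2) ℝ).toBasis, Matrix.det_fin_two]
  simp [LinearMap.toMatrix_apply, stretchAlong_apply, EuclideanSpace.inner_single_right]
  field_simp
  linear_combination (l ^ 2 - 1) * hw2

/-- Let `s` be a seminorm on `ℝ²` such that `𝓘²_+(s) ≤ 𝓘²_+(s ∘ T)` for every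
`T ∈ SL₂(ℝ)` (i.e. every linear map of determinant `1`). Then `s` is
`√2`-quasi-conformal: `s(v) ≤ √2·s(w)` for all `v, w` on the unit circle. -/
theorem sqrt_two_quasiconformal_of_Iplus_min (s : Seminorm ℝ (EuclideanSpace ℝ (Fin 2)))
    (h : ∀ T : EuclideanSpace ℝ (Fin 2) →ₗ[ℝ] EuclideanSpace ℝ (Fin 2),
      LinearMap.det T = 1 → Iplus 2 2 s ≤ Iplus 2 2 (s.comp T)) :
    ∀ v w : EuclideanSpace ℝ (Fin 2), ‖v‖ = 1 → ‖w‖ = 1 →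
      s v ≤ Real.sqrt 2 * s w := by
  intro v w hv hw
  by_contra! hlt
  set I := Iplus 2 2 s
  have hvI : s v ^ 2 ≤ I := by simpa using rpow_le_Iplus (s := s) zero_le_two hv
  have hwI : 2 * s w ^ 2 < I := by
    nlinarith [Real.sq_sqrt zero_le_two, mul_nonneg (Real.sqrt_nonneg 2) (apply_nonneg s w)]
  have hI : 0 < I := by nlinarith
  set t := s w ^ 2 / I
  have ht : t < 1 / 2 := by rw [div_lt_iff₀ hI]; linarith
  have hsw : s w ≤ √t * √I := by
    rw [← Real.sqrt_mul (by positivity), div_mul_cancel₀ _ hI.ne', Real.sqrt_sq (apply_nonneg s w)]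
  have hmin := h _ (det_stretchAlong hw (Real.sqrt_pos.2 (by linarith : 0 < 2 - 2 * t)).ne')
  have hstretch : Iplus 2 2 (s.comp (stretchAlong w √(2 - 2 * t))) ≤ stretchRatio t * I :=
    Iplus_le fun x hx => by
      simpa only [Real.rpow_two, Seminorm.comp_apply, Real.sq_sqrt hI.le] using
        s.stretchAlong_sq_le (C := √I) Seminorm.le_sqrt_Iplus_mul_norm (by positivity) ht hw hsw hx
  nlinarith [stretchRatio_lt_one (by positivity) ht]
end

section
/- Let n ≥ 1, p ≥ 1, let Y be a finite-dimensional real normed vector space with norm ‖·‖, let B be the closed Euclidean unit ball in ℝⁿ, let L : ℝⁿ → Y be a linear map, and let ψ : B → Y be a smooth map (C¹ on a neighborhood of B) with ψ(z) = L(z) for every z ∈ ∂B. Then ω_n·𝓘^p_+(‖·‖ ∘ L) ≤ ∫_B 𝓘^p_+(‖·‖ ∘ d_zψ) dL^n(z), i.e., the functional 𝓘^p_+ is quasi-convex. -/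
/-!
The average of `dψ` over the ball is `L`: on every chord of the ball parallel to a coordinate
axis, the fundamental theorem of calculus integrates the partial derivative of `ψ - L` to
zero, because `ψ - L` vanishes at both endpoints, and Fubini assembles the chords. Since
`𝓘^p_+(‖·‖ ∘ A) = ‖A‖^p` and `‖·‖^p` is convex for `p ≥ 1`, Jensen's inequality for the
average then gives `‖L‖^p ≤ ⨍_B ‖dψ‖^p`.
-/
open MeasureTheory Metric

open Set RealInnerProductSpace

section

variable {Y : Type*} [NormedAddCommGroup Y] [NormedSpace ℝ Y]

theorem Iplus_normSeminorm_comp {n : ℕ} {p : ℝ} (hp : 0 < p)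
    (A : EuclideanSpace ℝ (Fin n) →L[ℝ] Y) :
    Iplus n p ((normSeminorm ℝ Y).comp A.toLinearMap) = ‖A‖ ^ p := by
  have hA := A.sSup_sphere_eq_norm
  rcases (sphere (0 : EuclideanSpace ℝ (Fin n)) 1).eq_empty_or_nonempty with h | h
  · have : IsEmpty (sphere (0 : EuclideanSpace ℝ (Fin n)) 1) := isEmpty_coe_sort.2 h
    rw [h, image_empty, Real.sSup_empty] at hA
    simp [Iplus, ← hA, Real.zero_rpow hp.ne']
  · obtain ⟨w, hw, hwA⟩ :=
      ((isCompact_sphere 0 1).image A.continuous.norm).sSup_mem (h.image _)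
    have hle : ∀ v : sphere (0 : EuclideanSpace ℝ (Fin n)) 1, ‖A v‖ ^ p ≤ ‖A‖ ^ p := fun v =>
      Real.rpow_le_rpow (norm_nonneg _)
        (A.unit_le_opNorm v (mem_sphere_zero_iff_norm.1 v.2).le) hp.le
    have : Nonempty (sphere (0 : EuclideanSpace ℝ (Fin n)) 1) := h.to_subtype
    refine le_antisymm (ciSup_le hle) ?_
    rw [← hA, ← hwA]
    exact le_ciSup (f := fun v : sphere (0 : EuclideanSpace ℝ (Fin n)) 1 => ‖A v‖ ^ p)
      ⟨_, forall_mem_range.2 hle⟩ ⟨w, hw⟩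

theorem convexOn_norm_rpow {p : ℝ} (hp : 1 ≤ p) : ConvexOn ℝ univ fun x : Y => ‖x‖ ^ p := by
  refine ⟨convex_univ, fun x _ y _ a b ha hb hab => ?_⟩
  calc ‖a • x + b • y‖ ^ p ≤ (a * ‖x‖ + b * ‖y‖) ^ p :=
        Real.rpow_le_rpow (norm_nonneg _)
          ((convexOn_norm convex_univ).2 trivial trivial ha hb hab) (by linarith)
    _ ≤ a * ‖x‖ ^ p + b * ‖y‖ ^ p :=
        (convexOn_rpow hp).2 (norm_nonneg x) (norm_nonneg y) ha hb hab

variable [CompleteSpace Y]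

theorem norm_setAverage_rpow_le {α : Type*} [MeasurableSpace α] {μ : Measure α} {s : Set α}
    {f : α → Y} {p : ℝ} (hp : 1 ≤ p) (h0 : μ s ≠ 0) (hs : μ s ≠ ⊤) (hf : IntegrableOn f s μ)
    (hfp : IntegrableOn (fun x => ‖f x‖ ^ p) s μ) :
    ‖⨍ x in s, f x ∂μ‖ ^ p ≤ ⨍ x in s, ‖f x‖ ^ p ∂μ :=
  (convexOn_norm_rpow hp).map_set_average_le
    (continuous_norm.rpow_const fun _ => Or.inr (by linarith)).continuousOn isClosed_univ h0 hs
    (ae_of_all _ fun _ => mem_univ _) hf hfp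

theorem norm_add_smul_sq_of_inner_eq_zero {E : Type*} [NormedAddCommGroup E]
    [InnerProductSpace ℝ E] {x u : E} (hu : ‖u‖ = 1) (hxu : ⟪x, u⟫ = 0) (t : ℝ) :
    ‖x + t • u‖ ^ 2 = ‖x‖ ^ 2 + t ^ 2 := by
  rw [norm_add_sq_real, inner_smul_right, hxu, norm_smul, hu, mul_one, Real.norm_eq_abs, sq_abs]
  ring

theorem integral_indicator_closedBall_fderiv_line_eq_zero {E : Type*} [NormedAddCommGroup E]
    [InnerProductSpace ℝ E] {g : E → Y} {x u : E}
    (hg : ∀ z ∈ closedBall (0 : E) 1, DifferentiableAt ℝ g z)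
    (hgc : ContinuousOn (fun z => fderiv ℝ g z u) (closedBall 0 1))
    (hg0 : ∀ z ∈ sphere (0 : E) 1, g z = 0) (hu : ‖u‖ = 1) (hxu : ⟪x, u⟫ = 0) :
    ∫ t : ℝ, (closedBall (0 : E) 1).indicator (fun z => fderiv ℝ g z u) (x + t • u) = 0 := by
  have hnorm := norm_add_smul_sq_of_inner_eq_zero hu hxu
  by_cases hx : 1 < ‖x‖
  · refine integral_eq_zero_of_ae (ae_of_all _ fun t => indicator_of_notMem ?_ _)
    rw [mem_closedBall_zero_iff, ← sq_le_one_iff₀ (norm_nonneg _), hnorm]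
    nlinarith [sq_nonneg t]
  set c := √(1 - ‖x‖ ^ 2)
  have hc : c ^ 2 = 1 - ‖x‖ ^ 2 := Real.sq_sqrt (by nlinarith [norm_nonneg x])
  have hc0 : 0 ≤ c := Real.sqrt_nonneg _
  have hchord : (fun t : ℝ => x + t • u) ⁻¹' closedBall 0 1 = Icc (-c) c := by
    ext t
    rw [mem_preimage, mem_closedBall_zero_iff, ← sq_le_one_iff₀ (norm_nonneg _), hnorm, mem_Icc,
      ← abs_le, ← abs_of_nonneg hc0, ← sq_le_sq, hc]
    constructor <;> intro h <;> linarith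
  have hends : ∀ t ∈ ({-c, c} : Set ℝ), x + t • u ∈ sphere (0 : E) 1 := by
    rintro t ht
    rw [mem_sphere_zero_iff_norm, ← pow_eq_one_iff_of_nonneg (norm_nonneg _) two_ne_zero, hnorm]
    rcases ht with rfl | rfl <;> simp [hc]
  have hderiv : ∀ t ∈ uIcc (-c) c,
      HasDerivAt (fun t : ℝ => g (x + t • u)) (fderiv ℝ g (x + t • u) u) t := by
    intro t ht
    rw [uIcc_of_le (by linarith), ← hchord] at ht
    simpa [Function.comp_def] using (hg _ ht).hasFDerivAt.comp_hasDerivAt t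
      (((hasDerivAt_id t).smul_const u).const_add x)
  have hint : IntervalIntegrable (fun t : ℝ => fderiv ℝ g (x + t • u) u) volume (-c) c := by
    refine ContinuousOn.intervalIntegrable (hgc.comp (by fun_prop) fun t ht => ?_)
    rwa [uIcc_of_le (by linarith), ← hchord] at ht
  simp_rw [← indicator_comp_right (fun t : ℝ => x + t • u), Function.comp_def]
  rw [hchord, integral_indicator measurableSet_Icc, integral_Icc_eq_integral_Ioc,
    ← intervalIntegral.integral_of_le (by linarith),
    intervalIntegral.integral_eq_sub_of_hasDerivAt hderiv hint,
    hg0 _ (hends c (by simp)), hg0 _ (hends (-c) (by simp)), sub_self]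

theorem toLp_insertNth_eq_add_smul_single {m : ℕ} (i : Fin (m + 1)) (t : ℝ) (y : Fin m → ℝ) :
    WithLp.toLp 2 (Fin.insertNth i t y) =
      WithLp.toLp 2 (Fin.insertNth i 0 y) + t • EuclideanSpace.single i (1 : ℝ) := by
  ext j
  rcases eq_or_ne j i with rfl | hj
  · simp
  · obtain ⟨k, rfl⟩ := Fin.exists_succAbove_eq hj
    simp [hj]

variable {n : ℕ}

theorem setIntegral_fderiv_apply_single_eq_zero {g : EuclideanSpace ℝ (Fin n) → Y}
    (hg : ∀ z ∈ closedBall (0 : EuclideanSpace ℝ (Fin n)) 1, DifferentiableAt ℝ g z)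
    (hgc : ContinuousOn (fderiv ℝ g) (closedBall 0 1))
    (hg0 : ∀ z ∈ sphere (0 : EuclideanSpace ℝ (Fin n)) 1, g z = 0) (i : Fin n) :
    ∫ z in closedBall (0 : EuclideanSpace ℝ (Fin n)) 1,
      fderiv ℝ g z (EuclideanSpace.single i 1) = 0 := by
  obtain ⟨m, rfl⟩ : ∃ m, n = m + 1 := ⟨n - 1, by have := i.pos; omega⟩
  set F := (closedBall (0 : EuclideanSpace ℝ (Fin (m + 1))) 1).indicator
    fun z => fderiv ℝ g z (EuclideanSpace.single i 1)
  let e : ℝ × (Fin m → ℝ) ≃ᵐ EuclideanSpace ℝ (Fin (m + 1)) :=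
    (MeasurableEquiv.piFinSuccAbove (fun _ => ℝ) i).symm.trans (MeasurableEquiv.toLp 2 _)
  have he : MeasurePreserving e (volume.prod volume) volume :=
    (PiLp.volume_preserving_toLp (Fin (m + 1))).comp
      (volume_preserving_piFinSuccAbove (fun _ => ℝ) i).symm
  have hF : Integrable F :=
    ((hgc.clm_apply continuousOn_const).integrableOn_compact
      (isCompact_closedBall 0 1)).integrable_indicator measurableSet_closedBall
  rw [← integral_indicator measurableSet_closedBall, ← he.integral_comp' F,
    integral_prod_symm (fun q => F (e q)) ((he.integrable_comp_emb e.measurableEmbedding).2 hF)]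
  refine integral_eq_zero_of_ae (ae_of_all _ fun y => ?_)
  have he_apply : ∀ t, e (t, y) =
      WithLp.toLp 2 (Fin.insertNth i 0 y) + t • EuclideanSpace.single i 1 :=
    (toLp_insertNth_eq_add_smul_single i · y)
  simp only [he_apply]
  exact integral_indicator_closedBall_fderiv_line_eq_zero hg (hgc.clm_apply continuousOn_const)
    hg0 (by simp) (by simp [EuclideanSpace.inner_single_right])

theorem setIntegral_fderiv_eq_zero_of_eqOn_sphere {g : EuclideanSpace ℝ (Fin n) → Y}
    (hg : ∀ z ∈ closedBall (0 : EuclideanSpace ℝ (Fin n)) 1, DifferentiableAt ℝ g z)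
    (hgc : ContinuousOn (fderiv ℝ g) (closedBall 0 1))
    (hg0 : ∀ z ∈ sphere (0 : EuclideanSpace ℝ (Fin n)) 1, g z = 0) :
    ∫ z in closedBall (0 : EuclideanSpace ℝ (Fin n)) 1, fderiv ℝ g z = 0 := by
  refine ContinuousLinearMap.coe_injective <|
    (EuclideanSpace.basisFun (Fin n) ℝ).toBasis.ext fun i => ?_
  simpa [ContinuousLinearMap.integral_apply
    (hgc.integrableOn_compact (isCompact_closedBall 0 1))]
    using setIntegral_fderiv_apply_single_eq_zero hg hgc hg0 i

theorem setAverage_fderiv_eq_of_eqOn_sphere {ψ : EuclideanSpace ℝ (Fin n) → Y}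
    (L : EuclideanSpace ℝ (Fin n) →ₗ[ℝ] Y)
    (hψ : ∀ z ∈ closedBall (0 : EuclideanSpace ℝ (Fin n)) 1, DifferentiableAt ℝ ψ z)
    (hψc : ContinuousOn (fderiv ℝ ψ) (closedBall 0 1))
    (hbd : ∀ z ∈ sphere (0 : EuclideanSpace ℝ (Fin n)) 1, ψ z = L z) :
    ⨍ z in closedBall (0 : EuclideanSpace ℝ (Fin n)) 1, fderiv ℝ ψ z =
      LinearMap.toContinuousLinearMap L := by
  set Lc := LinearMap.toContinuousLinearMap L
  have hfderiv : ∀ z ∈ closedBall (0 : EuclideanSpace ℝ (Fin n)) 1,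
      fderiv ℝ (fun w => ψ w - Lc w) z = fderiv ℝ ψ z - Lc := fun z hz => by
    rw [fderiv_fun_sub (hψ z hz) Lc.differentiableAt, Lc.fderiv]
  have hzero := setIntegral_fderiv_eq_zero_of_eqOn_sphere (g := fun w => ψ w - Lc w)
    (fun z hz => (hψ z hz).sub Lc.differentiableAt)
    ((hψc.sub continuousOn_const).congr hfderiv)
    (fun z hz => sub_eq_zero.2 (hbd z hz))
  rw [setIntegral_congr_fun measurableSet_closedBall hfderiv,
    integral_sub (hψc.integrableOn_compact (isCompact_closedBall 0 1))
      (integrableOn_const measure_closedBall_lt_top.ne), setIntegral_const, sub_eq_zero] at hzero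
  have hvol : volume.real (closedBall (0 : EuclideanSpace ℝ (Fin n)) 1) ≠ 0 :=
    ENNReal.toReal_ne_zero.2
      ⟨(measure_closedBall_pos volume 0 one_pos).ne', measure_closedBall_lt_top.ne⟩
  rw [setAverage_eq, hzero, smul_smul, inv_mul_cancel₀ hvol, one_smul]

end

theorem Iplus_quasiconvex_general (n : ℕ)
    {Y : Type*} [NormedAddCommGroup Y] [NormedSpace ℝ Y] [FiniteDimensional ℝ Y]
    (p : ℝ) (hp : 1 ≤ p)
    (L : EuclideanSpace ℝ (Fin n) →ₗ[ℝ] Y) (ψ : EuclideanSpace ℝ (Fin n) → Y)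
    (U : Set (EuclideanSpace ℝ (Fin n))) (hU : IsOpen U)
    (hBU : closedBall (0 : EuclideanSpace ℝ (Fin n)) 1 ⊆ U)
    (hψ : ContDiffOn ℝ 1 ψ U)
    (hbd : ∀ z ∈ sphere (0 : EuclideanSpace ℝ (Fin n)) 1, ψ z = L z) :
    (volume (closedBall (0 : EuclideanSpace ℝ (Fin n)) 1)).toReal *
        Iplus n p ((normSeminorm ℝ Y).comp L) ≤
      ∫ z in closedBall (0 : EuclideanSpace ℝ (Fin n)) 1,
        Iplus n p ((normSeminorm ℝ Y).comp (fderiv ℝ ψ z).toLinearMap) := by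
  have := FiniteDimensional.complete ℝ Y
  set B := closedBall (0 : EuclideanSpace ℝ (Fin n)) 1
  have hp0 : 0 < p := by linarith
  have hdiff : ∀ z ∈ B, DifferentiableAt ℝ ψ z := fun z hz =>
    (hψ.differentiableOn one_ne_zero).differentiableAt (hU.mem_nhds (hBU hz))
  have hcont : ContinuousOn (fderiv ℝ ψ) B :=
    (hψ.continuousOn_fderiv_of_isOpen hU le_rfl).mono hBU
  have hjensen : ‖⨍ z in B, fderiv ℝ ψ z‖ ^ p ≤ ⨍ z in B, ‖fderiv ℝ ψ z‖ ^ p :=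
    norm_setAverage_rpow_le hp (measure_closedBall_pos volume 0 one_pos).ne'
      measure_closedBall_lt_top.ne (hcont.integrableOn_compact (isCompact_closedBall 0 1))
      ((hcont.norm.rpow_const fun _ _ => Or.inr hp0.le).integrableOn_compact
        (isCompact_closedBall 0 1))
  rw [← L.coe_toContinuousLinearMap, Iplus_normSeminorm_comp hp0,
    ← setAverage_fderiv_eq_of_eqOn_sphere L hdiff hcont hbd]
  simp only [Iplus_normSeminorm_comp hp0]
  rw [← measure_smul_setAverage (μ := volume) _ measure_closedBall_lt_top.ne, smul_eq_mul]
  exact mul_le_mul_of_nonneg_left hjensen ENNReal.toReal_nonneg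

/-- Quasi-convexity of `𝓘^p_+`: for `Y` a finite-dimensional normed space, `B` the
closed Euclidean unit ball in `ℝⁿ`, `L : ℝⁿ → Y` linear, and `ψ` a `C¹` map on a
neighborhood of `B` with `ψ = L` on `∂B`:
`ω_n·𝓘^p_+(‖·‖ ∘ L) ≤ ∫_B 𝓘^p_+(‖·‖ ∘ d_zψ) dLⁿ(z)`. -/
theorem Iplus_quasiconvex (n : ℕ) (hn : 1 ≤ n)
    {Y : Type*} [NormedAddCommGroup Y] [NormedSpace ℝ Y] [FiniteDimensional ℝ Y]
    (p : ℝ) (hp : 1 ≤ p)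
    (L : EuclideanSpace ℝ (Fin n) →ₗ[ℝ] Y) (ψ : EuclideanSpace ℝ (Fin n) → Y)
    (U : Set (EuclideanSpace ℝ (Fin n))) (hU : IsOpen U)
    (hBU : closedBall (0 : EuclideanSpace ℝ (Fin n)) 1 ⊆ U)
    (hψ : ContDiffOn ℝ 1 ψ U)
    (hbd : ∀ z ∈ sphere (0 : EuclideanSpace ℝ (Fin n)) 1, ψ z = L z) :
    (volume (closedBall (0 : EuclideanSpace ℝ (Fin n)) 1)).toReal *
        Iplus n p ((normSeminorm ℝ Y).comp L) ≤
      ∫ z in closedBall (0 : EuclideanSpace ℝ (Fin n)) 1,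
        Iplus n p ((normSeminorm ℝ Y).comp (fderiv ℝ ψ z).toLinearMap) :=
  Iplus_quasiconvex_general n p hp L ψ U hU hBU hψ hbd
end
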